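/- arXiv:1908.01047 — 6 statements merged into one kernel-verified Lean document; each statement's English description precedes it below -/
import Mathlib

section
/- Let X_k ∈ ℂ^{n×k} have SVD X_k = U Σ V* with U ∈ ℂ^{n×n} unitary, Σ ∈ ℂ^{n×n} invertible diagonal, V ∈ ℂ^{k×n} with orthonormal columns. Let ρ > 0, x ∈ ℂ^n, and set X_{k+1} = [ρ X_k, x] ∈ ℂ^{n×(k+1)}. Let S = [Σ, ρ^{-1} U* x] ∈ ℂ^{n×(n+1)} have SVD S = U_s Σ_s V_s* with V_s ∈ ℂ^{(n+1)×n} partitioned as V_s = [V_{s1}; v_{s2}] where V_{s1} ∈ ℂ^{n×n} and v_{s2} ∈ ℂ^{1×n}. Then X_{k+1} = (U U_s)(ρ Σ_s) [V V_{s1}; v_{s2}]*, and this is an SVD: U U_s is unitary, ρ Σ_s is nonnegative diagonal, and [V V_{s1}; v_{s2}] ∈ ℂ^{(k+1)×n} has orthonormal columns. -/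
open Matrix

/-- Append a column `x` at the right end of a matrix. -/
def appendCol {n k : ℕ} (M : Matrix (Fin n) (Fin k) ℂ) (x : Fin n → ℂ) :
    Matrix (Fin n) (Fin (k + 1)) ℂ :=
  Matrix.of fun i j => Fin.lastCases (motive := fun _ => ℂ) (x i) (fun j' => M i j') j

/-- Append a row `v` at the bottom of a matrix. -/
def appendRow {k n : ℕ} (M : Matrix (Fin k) (Fin n) ℂ) (v : Fin n → ℂ) :
    Matrix (Fin (k + 1)) (Fin n) ℂ :=
  Matrix.of fun i j => Fin.lastCases (motive := fun _ => ℂ) (v j) (fun i' => M i' j) i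

/-- Remove the last row of a matrix. -/
def dropLastRow {k n : ℕ} (M : Matrix (Fin (k + 1)) (Fin n) ℂ) :
    Matrix (Fin k) (Fin n) ℂ :=
  Matrix.of fun i j => M i.castSucc j

/-- The last row of a matrix. -/
def lastRow {k n : ℕ} (M : Matrix (Fin (k + 1)) (Fin n) ℂ) : Fin n → ℂ :=
  fun j => M (Fin.last k) j

/-- block matrix [V 0; 0 1] -/
def blockP {k n : ℕ} (V : Matrix (Fin k) (Fin n) ℂ) :
    Matrix (Fin (k + 1)) (Fin (n + 1)) ℂ :=
  Matrix.of fun i j =>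
    Fin.lastCases (motive := fun _ => ℂ)
      (Fin.lastCases (motive := fun _ => ℂ) 1 (fun _ => 0) j)
      (fun i' => Fin.lastCases (motive := fun _ => ℂ) 0 (fun j' => V i' j') j) i

lemma mul_appendCol {n k : ℕ} (M : Matrix (Fin n) (Fin n) ℂ)
    (A : Matrix (Fin n) (Fin k) ℂ) (y : Fin n → ℂ) :
    M * appendCol A y = appendCol (M * A) (M *ᵥ y) := by
  ext i j
  refine Fin.lastCases ?_ (fun j' => ?_) j <;>
    simp [appendCol, mul_apply, mulVec, dotProduct]

lemma smul_appendCol {n k : ℕ} (c : ℂ) (A : Matrix (Fin n) (Fin k) ℂ) (y : Fin n → ℂ) :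
    c • appendCol A y = appendCol (c • A) (c • y) := by
  ext i j
  refine Fin.lastCases ?_ (fun j' => ?_) j <;> simp [appendCol]

lemma appendRow_eq_blockP_mul {k n : ℕ} (V : Matrix (Fin k) (Fin n) ℂ)
    (Vs : Matrix (Fin (n + 1)) (Fin n) ℂ) :
    appendRow (V * dropLastRow Vs) (lastRow Vs) = blockP V * Vs := by
  ext i a
  refine Fin.lastCases ?_ (fun i' => ?_) i <;>
    simp [appendRow, blockP, mul_apply, Fin.sum_univ_castSucc, lastRow, dropLastRow]

lemma blockP_HMul {k n : ℕ} (V : Matrix (Fin k) (Fin n) ℂ) (hV : Vᴴ * V = 1) :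
    (blockP V)ᴴ * blockP V = 1 := by
  ext a b
  refine Fin.lastCases ?_ (fun a' => ?_) a
  · refine Fin.lastCases ?_ (fun b' => ?_) b <;>
      simp [blockP, mul_apply, conjTranspose_apply, Fin.sum_univ_castSucc, one_apply,
        (Fin.castSucc_lt_last _).ne, (Fin.castSucc_lt_last _).ne', Fin.last_pos]
  · refine Fin.lastCases ?_ (fun b' => ?_) b
    · simp [blockP, mul_apply, conjTranspose_apply, Fin.sum_univ_castSucc, one_apply,
        (Fin.castSucc_lt_last _).ne]
    · have h := congrFun (congrFun hV a') b'
      simp only [mul_apply, conjTranspose_apply, one_apply] at h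
      simp only [blockP, Matrix.of_apply, mul_apply, conjTranspose_apply,
        Fin.sum_univ_castSucc, Fin.lastCases_castSucc, Fin.lastCases_last, one_apply,
        Fin.castSucc_inj, starRingEnd_apply]
      simpa using h

lemma appendCol_mul_blockPH {n k : ℕ} (C : Matrix (Fin n) (Fin n) ℂ) (z : Fin n → ℂ)
    (V : Matrix (Fin k) (Fin n) ℂ) :
    appendCol C z * (blockP V)ᴴ = appendCol (C * Vᴴ) z := by
  ext i j
  refine Fin.lastCases ?_ (fun j' => ?_) j <;>
    simp [appendCol, blockP, mul_apply, conjTranspose_apply, Fin.sum_univ_castSucc]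
/-- Weighted incremental SVD update: given an SVD `X_k = U Sg Vᴴ` (with `U` unitary,
`Sg` invertible diagonal, `V` with orthonormal columns), `ρ > 0` and a new column `x`,
an SVD of `S = [Sg, ρ⁻¹ Uᴴ x] = U_s Sg_s V_sᴴ` yields the SVD
`[ρ X_k, x] = (U U_s)(ρ Sg_s)[V V_{s1}; v_{s2}]ᴴ`: the factorization holds, `U U_s` is
unitary, `ρ Sg_s` is nonnegative diagonal, and `[V V_{s1}; v_{s2}]` has orthonormal
columns. -/
theorem stmt5 (n k : ℕ) (ρ : ℝ) (hρ : 0 < ρ)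
    (Xk : Matrix (Fin n) (Fin k) ℂ) (x : Fin n → ℂ)
    (U Sg : Matrix (Fin n) (Fin n) ℂ) (V : Matrix (Fin k) (Fin n) ℂ)
    (hU : Uᴴ * U = 1) (hU' : U * Uᴴ = 1)
    (hSgDiag : Sg.IsDiag) (hSgInv : IsUnit Sg)
    (hV : Vᴴ * V = 1)
    (hX : Xk = U * Sg * Vᴴ)
    (Us Sgs : Matrix (Fin n) (Fin n) ℂ) (Vs : Matrix (Fin (n + 1)) (Fin n) ℂ)
    (hUs : Usᴴ * Us = 1) (hUs' : Us * Usᴴ = 1)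
    (hSgsDiag : Sgs.IsDiag)
    (hSgsPos : ∀ i, 0 ≤ (Sgs i i).re ∧ (Sgs i i).im = 0)
    (hVs : Vsᴴ * Vs = 1)
    (hS : appendCol Sg ((ρ : ℂ)⁻¹ • (Uᴴ *ᵥ x)) = Us * Sgs * Vsᴴ) :
    appendCol ((ρ : ℂ) • Xk) x
      = (U * Us) * ((ρ : ℂ) • Sgs) * (appendRow (V * dropLastRow Vs) (lastRow Vs))ᴴ ∧
    ((U * Us)ᴴ * (U * Us) = 1 ∧ (U * Us) * (U * Us)ᴴ = 1) ∧
    ((ρ : ℂ) • Sgs).IsDiag ∧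
    (∀ i, 0 ≤ (((ρ : ℂ) • Sgs) i i).re ∧ (((ρ : ℂ) • Sgs) i i).im = 0) ∧
    (appendRow (V * dropLastRow Vs) (lastRow Vs))ᴴ *
      appendRow (V * dropLastRow Vs) (lastRow Vs) = 1 := by
  have hρ0 : (ρ : ℂ) ≠ 0 := by exact_mod_cast hρ.ne'
  refine ⟨?_, ⟨?_, ?_⟩, ?_, ?_, ?_⟩
  · symm
    rw [appendRow_eq_blockP_mul, conjTranspose_mul]
    have h1 : (U * Us) * ((ρ:ℂ) • Sgs) * (Vsᴴ * (blockP V)ᴴ)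
        = (ρ:ℂ) • (U * (Us * Sgs * Vsᴴ) * (blockP V)ᴴ) := by
      simp only [Matrix.mul_smul, Matrix.smul_mul]
      congr 1
      simp only [Matrix.mul_assoc]
    have hvec : (ρ:ℂ) • (U *ᵥ ((ρ:ℂ)⁻¹ • (Uᴴ *ᵥ x))) = x := by
      rw [mulVec_smul, mulVec_mulVec, hU', one_mulVec, smul_smul,
        mul_inv_cancel₀ hρ0, one_smul]
    rw [h1, ← hS, mul_appendCol, appendCol_mul_blockPH, smul_appendCol, hvec, hX]
  · rw [conjTranspose_mul, mul_assoc, ← mul_assoc Uᴴ, hU, one_mul, hUs]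
  · rw [conjTranspose_mul, mul_assoc, ← mul_assoc Us, hUs', one_mul, hU']
  · intro i j h
    simp [Matrix.smul_apply, hSgsDiag h]
  · intro i
    have h := hSgsPos i
    constructor
    · simp only [Matrix.smul_apply, smul_eq_mul, Complex.mul_re, Complex.ofReal_re,
        Complex.ofReal_im, h.2, zero_mul, mul_zero, sub_zero]
      exact mul_nonneg hρ.le h.1
    · simp [Matrix.smul_apply, Complex.mul_im, h.2]
  · rw [appendRow_eq_blockP_mul, conjTranspose_mul,
      Matrix.mul_assoc Vsᴴ (blockP V)ᴴ (blockP V * Vs),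
      ← Matrix.mul_assoc (blockP V)ᴴ (blockP V) Vs,
      blockP_HMul V hV, Matrix.one_mul, hVs]
end

section
/- Let χ ∈ ℂ^{n×w} with SVD χ = U Σ V*, V unitary, write V = [v₁; V₂] with v₁ the first row. Let Ś = Σ − U* x₁ z₁ᵀ V where x₁ is the first column of χ, with SVD Ś = U_ś [Σ_ś, 0] [V_ś, Ṽ_ś]*. Then v₁ V_ś = 0, i.e., the first row of V is orthogonal to all columns of V_ś. -/
open Matrix

/-- In the decremental SVD step, with `χ = U Sg Vᴴ` (`U` with orthonormal columns, `V`
unitary), `Ś = Sg − Uᴴ x₁ z₁ᵀ V` with SVD `Ś = U_ś Sg_ś V_śᴴ` (nonzero part, `Sg_ś`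
invertible), the first row `v₁` of `V` is orthogonal to all columns of `V_ś`, i.e.
`v₁ V_ś = 0`. -/
theorem stmt7 (n w q : ℕ) [NeZero w] (hq : q = min n w)
    (χ : Matrix (Fin n) (Fin w) ℂ)
    (U : Matrix (Fin n) (Fin q) ℂ) (Sg : Matrix (Fin q) (Fin w) ℂ)
    (V : Matrix (Fin w) (Fin w) ℂ)
    (hU : Uᴴ * U = 1) (hV : Vᴴ * V = 1) (hV' : V * Vᴴ = 1)
    (hχ : χ = U * Sg * Vᴴ)
    (Uds Sgds : Matrix (Fin q) (Fin q) ℂ) (Vds : Matrix (Fin w) (Fin q) ℂ)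
    (hUds : Udsᴴ * Uds = 1) (hVds : Vdsᴴ * Vds = 1) (hSgdsInv : IsUnit Sgds)
    (hSd : Sg - Uᴴ * vecMulVec (fun i => χ i 0)
        (fun j : Fin w => if j = 0 then (1 : ℂ) else 0) * V = Uds * Sgds * Vdsᴴ) :
    (fun j : Fin w => V 0 j) ᵥ* Vds = 0 := by
  set z : Fin w → ℂ := fun j : Fin w => if j = 0 then (1 : ℂ) else 0 with hzdef
  set x : Fin n → ℂ := fun i => χ i 0 with hxdef
  set c : Fin w → ℂ := fun j => star (V 0 j) with hcdef
  have hVc : V *ᵥ c = z := by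
    funext i
    have h := congrFun (congrFun hV' i) 0
    simpa [mulVec, dotProduct, Matrix.mul_apply, conjTranspose_apply,
      Matrix.one_apply, hcdef, hzdef] using h
  have hUχ : Uᴴ * χ = Sg * Vᴴ := by
    rw [hχ, ← Matrix.mul_assoc, ← Matrix.mul_assoc, hU, Matrix.one_mul]
  have hUx : Uᴴ *ᵥ x = Sg *ᵥ c := by
    funext k
    have h := congrFun (congrFun hUχ k) 0
    simp only [Matrix.mul_apply, conjTranspose_apply] at h
    simp only [mulVec, dotProduct, conjTranspose_apply, hxdef, hcdef]
    rw [h]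
  have hxz : vecMulVec x z *ᵥ z = x := by
    funext i
    simp [vecMulVec, mulVec, dotProduct, hzdef, mul_ite, ite_mul]
  have hkey : (Uds * Sgds * Vdsᴴ) *ᵥ c = 0 := by
    rw [← hSd, sub_mulVec, ← Matrix.mulVec_mulVec, ← Matrix.mulVec_mulVec, hVc,
      hxz, hUx, sub_self]
  have hSgVc : Sgds *ᵥ (Vdsᴴ *ᵥ c) = 0 := by
    have h : Udsᴴ *ᵥ ((Uds * Sgds * Vdsᴴ) *ᵥ c) = 0 := by
      rw [hkey, Matrix.mulVec_zero]
    rw [Matrix.mulVec_mulVec, ← Matrix.mul_assoc, ← Matrix.mul_assoc, hUds,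
      Matrix.one_mul] at h
    rwa [Matrix.mulVec_mulVec]
  have hVdsc : Vdsᴴ *ᵥ c = 0 := by
    obtain ⟨u, hu⟩ := hSgdsInv
    have h : (↑u⁻¹ : Matrix (Fin q) (Fin q) ℂ) *ᵥ (Sgds *ᵥ (Vdsᴴ *ᵥ c)) = 0 := by
      rw [hSgVc, Matrix.mulVec_zero]
    rwa [← hu, Matrix.mulVec_mulVec, Matrix.mulVec_mulVec,
      Units.inv_mul, Matrix.one_mul] at h
  funext k
  have h := congrFun hVdsc k
  simp only [mulVec, dotProduct, conjTranspose_apply, hcdef, Pi.zero_apply,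
    ← star_mul'] at h
  have h2 := congrArg star h
  rw [star_sum] at h2
  simpa [vecMul, dotProduct, mul_comm] using h2
end

section
/- Under the setup of the decremental SVD step, the matrix χ́ obtained by deleting the first column of χ satisfies χ́ = (U U_ś) Σ_ś (V₂ V_ś)*, where χ = U Σ V* is an SVD, Ś = Σ − U* x₁ z₁ᵀ V has SVD U_ś Σ_ś V_ś*, and V₂ is V with its first row removed. -/
open Matrix

def dropFirstCol {n w : ℕ} (M : Matrix (Fin n) (Fin (w + 1)) ℂ) :
    Matrix (Fin n) (Fin w) ℂ :=
  Matrix.of fun i j => M i j.succ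

def dropFirstRow {w n : ℕ} (M : Matrix (Fin (w + 1)) (Fin n) ℂ) :
    Matrix (Fin w) (Fin n) ℂ :=
  Matrix.of fun i j => M i.succ j

/-!
Write `A = x₁ e₁ᵀ`. Since `x₁ = χ e₁ = U (Sg Vᴴ e₁)` lies in the range of `U`, the projection
`U Uᴴ` fixes `A`, so `U Ś Vᴴ = U Sg Vᴴ - U Uᴴ A V Vᴴ = χ - A`. The matrix `χ - A` is `χ` with its
first column zeroed, and deleting the first column of `M Vᴴ` is the same as deleting the first
row of `V`.
-/

section Projection

variable {α m k : Type*} [Fintype m] [Fintype k]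

theorem mul_conjTranspose_mul_mul_of_conjTranspose_mul_self [Semiring α] [Star α]
    [DecidableEq k] {p : Type*} {U : Matrix m k α} (hU : Uᴴ * U = 1) (B : Matrix k p α) :
    U * Uᴴ * (U * B) = U * B := by
  rw [Matrix.mul_assoc, ← Matrix.mul_assoc Uᴴ, hU, Matrix.one_mul]

theorem mul_sub_conjTranspose_mul_mul_mul_conjTranspose [Ring α] [Star α] {l : Type*}
    [Fintype l] [DecidableEq l] {U : Matrix m k α} {V : Matrix l l α} (hV : V * Vᴴ = 1)
    {A : Matrix m l α} (hA : U * Uᴴ * A = A) (S : Matrix k l α) :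
    U * (S - Uᴴ * A * V) * Vᴴ = U * S * Vᴴ - A := by
  rw [Matrix.mul_sub, Matrix.sub_mul]
  congr 1
  calc U * (Uᴴ * A * V) * Vᴴ = U * Uᴴ * A * (V * Vᴴ) := by simp only [Matrix.mul_assoc]
    _ = A := by rw [hV, Matrix.mul_one, hA]

end Projection

theorem vecMulVec_col_eq_mul {α m l p : Type*} [Semiring α] [Fintype l] [DecidableEq l]
    (M : Matrix m l α) (j : l) (y : p → α) :
    vecMulVec (M.col j) y = M * vecMulVec (Pi.single j 1) y := by
  rw [mul_vecMulVec, mulVec_single_one]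

section DropFirst

variable {n w : ℕ}

theorem dropFirstCol_mul_conjTranspose {p : ℕ} (M : Matrix (Fin n) (Fin p) ℂ)
    (V : Matrix (Fin (w + 1)) (Fin p) ℂ) : dropFirstCol (M * Vᴴ) = M * (dropFirstRow V)ᴴ :=
  rfl

theorem dropFirstCol_sub_vecMulVec_ite_zero (M : Matrix (Fin n) (Fin (w + 1)) ℂ)
    (x : Fin n → ℂ) :
    dropFirstCol (M - vecMulVec x (fun j : Fin (w + 1) => if j = 0 then (1 : ℂ) else 0)) =
      dropFirstCol M := by
  ext i j
  simp [dropFirstCol, vecMulVec_apply, Fin.succ_ne_zero]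

end DropFirst

theorem stmt8_general (n w q : ℕ)
    (χ : Matrix (Fin n) (Fin (w + 1)) ℂ)
    (U : Matrix (Fin n) (Fin q) ℂ) (Sg : Matrix (Fin q) (Fin (w + 1)) ℂ)
    (V : Matrix (Fin (w + 1)) (Fin (w + 1)) ℂ)
    (hU : Uᴴ * U = 1) (hV' : V * Vᴴ = 1)
    (hχ : χ = U * Sg * Vᴴ)
    (Uds Sgds : Matrix (Fin q) (Fin q) ℂ) (Vds : Matrix (Fin (w + 1)) (Fin q) ℂ)
    (hSd : Sg - Uᴴ * vecMulVec (fun i => χ i 0)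
        (fun j : Fin (w + 1) => if j = 0 then (1 : ℂ) else 0) * V = Uds * Sgds * Vdsᴴ) :
    dropFirstCol χ = (U * Uds) * Sgds * (dropFirstRow V * Vds)ᴴ := by
  set A := vecMulVec (fun i => χ i 0) (fun j : Fin (w + 1) => if j = 0 then (1 : ℂ) else 0)
  have hA : U * Uᴴ * A = A := by
    have hA_eq : A = U * (Sg * Vᴴ * vecMulVec (Pi.single (0 : Fin (w + 1)) 1)
        (fun j : Fin (w + 1) => if j = 0 then (1 : ℂ) else 0)) := by
      rw [← Matrix.mul_assoc, ← Matrix.mul_assoc, ← hχ]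
      exact vecMulVec_col_eq_mul χ 0 _
    rw [hA_eq, mul_conjTranspose_mul_mul_of_conjTranspose_mul_self hU]
  calc dropFirstCol χ = dropFirstCol (χ - A) := (dropFirstCol_sub_vecMulVec_ite_zero χ _).symm
    _ = dropFirstCol (U * (Uds * Sgds * Vdsᴴ) * Vᴴ) := by
      rw [← hSd, mul_sub_conjTranspose_mul_mul_mul_conjTranspose hV' hA, ← hχ]
    _ = (U * Uds) * Sgds * (dropFirstRow V * Vds)ᴴ := by
      rw [dropFirstCol_mul_conjTranspose, conjTranspose_mul]
      simp only [Matrix.mul_assoc]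

/-- Decremental SVD (Proposition 2): if `χ = U Sg Vᴴ` is an SVD, `Ś = Sg − Uᴴ x₁ z₁ᵀ V`
has SVD `U_ś Sg_ś V_śᴴ`, and `V₂` is `V` with its first row removed, then the matrix `χ́`
obtained by deleting the first column of `χ` satisfies `χ́ = (U U_ś) Sg_ś (V₂ V_ś)ᴴ`. -/
theorem stmt8 (n w q : ℕ) (hq : q = min n (w + 1))
    (χ : Matrix (Fin n) (Fin (w + 1)) ℂ)
    (U : Matrix (Fin n) (Fin q) ℂ) (Sg : Matrix (Fin q) (Fin (w + 1)) ℂ)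
    (V : Matrix (Fin (w + 1)) (Fin (w + 1)) ℂ)
    (hU : Uᴴ * U = 1) (hV : Vᴴ * V = 1) (hV' : V * Vᴴ = 1)
    (hχ : χ = U * Sg * Vᴴ)
    (Uds Sgds : Matrix (Fin q) (Fin q) ℂ) (Vds : Matrix (Fin (w + 1)) (Fin q) ℂ)
    (hUds : Udsᴴ * Uds = 1) (hVds : Vdsᴴ * Vds = 1)
    (hSd : Sg - Uᴴ * vecMulVec (fun i => χ i 0)
        (fun j : Fin (w + 1) => if j = 0 then (1 : ℂ) else 0) * V = Uds * Sgds * Vdsᴴ) :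
    dropFirstCol χ = (U * Uds) * Sgds * (dropFirstRow V * Vds)ᴴ :=
  stmt8_general n w q χ U Sg V hU hV' hχ Uds Sgds Vds hSd
end

section
/- Let X_k ∈ ℂ^{n×k} and Y_k ∈ ℂ^{n×k}, with X_k = U_k Σ_k V_k* an SVD (U_k unitary, Σ_k invertible). Let A_k = Y_k V_k Σ_k^{-1} U_k*. Given new data (x, y), let X_{k+1} = [ρ X_k, x], Y_{k+1} = [ρ Y_k, y], and let X_{k+1} = U_{k+1} Σ_{k+1} V_{k+1}* be the incrementally updated SVD with V_{k+1} = [V_k V_{s1}; v_{s2}] from the SVD of S = [Σ_k, ρ^{-1} U_k* x], with Σ_{k+1} invertible. Then A_{k+1} := Y_{k+1} V_{k+1} Σ_{k+1}^{-1} U_{k+1}* satisfies the rank-one update A_{k+1} = A_k + (y − A_k x) v_{s2} Σ_{k+1}^{-1} U_{k+1}*. -/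
open Matrix

lemma appendCol_mul_appendRow {n k m : ℕ} (M : Matrix (Fin n) (Fin k) ℂ) (x : Fin n → ℂ)
    (N : Matrix (Fin k) (Fin m) ℂ) (v : Fin m → ℂ) :
    appendCol M x * appendRow N v = M * N + vecMulVec x v := by
  ext i j
  simp [appendCol, appendRow, mul_apply, vecMulVec, Fin.sum_univ_castSucc]

lemma appendRow_dropLastRow {k n : ℕ} (M : Matrix (Fin (k + 1)) (Fin n) ℂ) :
    appendRow (dropLastRow M) (lastRow M) = M := by
  ext i j
  cases i using Fin.lastCases <;> simp [appendRow, dropLastRow, lastRow]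

lemma mul_vecMulVec' {n m p : ℕ} (M : Matrix (Fin n) (Fin m) ℂ) (u : Fin m → ℂ) (v : Fin p → ℂ) :
    M * vecMulVec u v = vecMulVec (M *ᵥ u) v := by
  ext i j
  simp [mul_apply, vecMulVec, mulVec, dotProduct, Finset.sum_mul, mul_assoc]

lemma vecMulVec_sub' {n m : ℕ} (u w : Fin n → ℂ) (v : Fin m → ℂ) :
    vecMulVec (u - w) v = vecMulVec u v - vecMulVec w v := by
  ext i j; simp [vecMulVec, sub_mul]

lemma smul_vecMulVec' {n m : ℕ} (a : ℂ) (u : Fin n → ℂ) (v : Fin m → ℂ) :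
    vecMulVec (a • u) v = a • vecMulVec u v := by
  ext i j; simp [vecMulVec, mul_assoc]

/-- Weighted incremental DMD update (Theorem 1): with `X_k = U_k Sg_k V_kᴴ` an SVD
(`U_k` unitary, `Sg_k` invertible), `A_k = Y_k V_k Sg_k⁻¹ U_kᴴ`, new data `(x, y)`,
`X_{k+1} = [ρ X_k, x]`, `Y_{k+1} = [ρ Y_k, y]`, and the incrementally updated SVD of
`X_{k+1}` obtained from an SVD `S = [Sg_k, ρ⁻¹ U_kᴴ x] = U_s Sg_s V_sᴴ`, the updated DMD
operator `A_{k+1} = Y_{k+1} V_{k+1} Sg_{k+1}⁻¹ U_{k+1}ᴴ` satisfies the rank-one update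
`A_{k+1} = A_k + (y − A_k x) v_{s2} Sg_{k+1}⁻¹ U_{k+1}ᴴ`. -/
theorem stmt9 (n k : ℕ) (ρ : ℝ) (hρ : 0 < ρ)
    (Xk Yk : Matrix (Fin n) (Fin k) ℂ) (x y : Fin n → ℂ)
    (Uk Sgk : Matrix (Fin n) (Fin n) ℂ) (Vk : Matrix (Fin k) (Fin n) ℂ)
    (hUk : Ukᴴ * Uk = 1) (hUk' : Uk * Ukᴴ = 1)
    (hSgk : IsUnit Sgk) (hVk : Vkᴴ * Vk = 1)
    (hXk : Xk = Uk * Sgk * Vkᴴ)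
    (Us Sgs : Matrix (Fin n) (Fin n) ℂ) (Vs : Matrix (Fin (n + 1)) (Fin n) ℂ)
    (hUs : Usᴴ * Us = 1) (hUs' : Us * Usᴴ = 1) (hVs : Vsᴴ * Vs = 1)
    (hS : appendCol Sgk ((ρ : ℂ)⁻¹ • (Ukᴴ *ᵥ x)) = Us * Sgs * Vsᴴ)
    (hSgs : IsUnit ((ρ : ℂ) • Sgs)) :
    appendCol ((ρ : ℂ) • Yk) y * appendRow (Vk * dropLastRow Vs) (lastRow Vs) *
        ((ρ : ℂ) • Sgs)⁻¹ * (Uk * Us)ᴴ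
      = Yk * Vk * Sgk⁻¹ * Ukᴴ +
        vecMulVec (y - (Yk * Vk * Sgk⁻¹ * Ukᴴ) *ᵥ x) (lastRow Vs) *
          ((ρ : ℂ) • Sgs)⁻¹ * (Uk * Us)ᴴ := by
  have hρc : (ρ : ℂ) ≠ 0 := by
    exact_mod_cast hρ.ne'
  set Vs1 := dropLastRow Vs with hVs1def
  set vs2 := lastRow Vs with hvs2def
  set c : Fin n → ℂ := (ρ : ℂ)⁻¹ • (Ukᴴ *ᵥ x) with hc
  set A := Yk * Vk * Sgk⁻¹ with hA
  set Sm := (ρ : ℂ) • Sgs with hSm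
  have hSm1 : Sm * Sm⁻¹ = 1 :=
    Matrix.mul_nonsing_inv _ ((Matrix.isUnit_iff_isUnit_det _).mp hSgs)
  have hSgk1 : Sgk⁻¹ * Sgk = 1 :=
    Matrix.nonsing_inv_mul _ ((Matrix.isUnit_iff_isUnit_det _).mp hSgk)
  -- key identity: Sgk * Vs1 + c vs2ᵀ = Us * Sgs
  have key : Sgk * Vs1 + vecMulVec c vs2 = Us * Sgs := by
    have h1 : appendCol Sgk c * Vs = Us * Sgs := by
      rw [hS, Matrix.mul_assoc (Us * Sgs) Vsᴴ Vs, hVs, mul_one]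
    calc Sgk * Vs1 + vecMulVec c vs2
        = appendCol Sgk c * appendRow Vs1 vs2 := (appendCol_mul_appendRow _ _ _ _).symm
      _ = appendCol Sgk c * Vs := by rw [hVs1def, hvs2def, appendRow_dropLastRow]
      _ = Us * Sgs := h1
  have hSV : Sgk * Vs1 = Us * Sgs - vecMulVec c vs2 := eq_sub_of_add_eq key
  have hVs1' : Vs1 = Sgk⁻¹ * (Us * Sgs - vecMulVec c vs2) := by
    rw [← hSV, ← mul_assoc, hSgk1, one_mul]
  -- the smul of the vecMulVec term
  have hsm : (ρ : ℂ) • vecMulVec c vs2 = vecMulVec (Ukᴴ *ᵥ x) vs2 := by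
    rw [hc, smul_vecMulVec', smul_smul, mul_inv_cancel₀ hρc, one_smul]
  -- the first summand
  have hterm : (ρ : ℂ) • Yk * (Vk * Vs1)
      = A * Us * Sm - vecMulVec (A *ᵥ (Ukᴴ *ᵥ x)) vs2 := by
    rw [hVs1', ← mul_vecMulVec', hA, hSm, hc, smul_vecMulVec']
    simp only [Matrix.mul_sub, Matrix.sub_mul, Matrix.smul_mul, Matrix.mul_smul, smul_sub,
      smul_smul, Matrix.mul_assoc]
    rw [inv_mul_cancel₀ hρc, one_smul]
  have hUUH : (Uk * Us)ᴴ = Usᴴ * Ukᴴ := by rw [conjTranspose_mul]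
  have hAx : (Yk * Vk * Sgk⁻¹ * Ukᴴ) *ᵥ x = A *ᵥ (Ukᴴ *ᵥ x) := by
    rw [hA, mulVec_mulVec]
  have hAU : A * Us * Sm * Sm⁻¹ * (Uk * Us)ᴴ = A * Ukᴴ := by
    rw [hUUH, mul_assoc (A * Us), hSm1, mul_one, mul_assoc A, ← mul_assoc Us, hUs', one_mul]
  calc appendCol ((ρ : ℂ) • Yk) y * appendRow (Vk * Vs1) vs2 * Sm⁻¹ * (Uk * Us)ᴴ
      = ((ρ : ℂ) • Yk * (Vk * Vs1) + vecMulVec y vs2) * Sm⁻¹ * (Uk * Us)ᴴ := by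
        rw [appendCol_mul_appendRow]
    _ = (A * Us * Sm - vecMulVec (A *ᵥ (Ukᴴ *ᵥ x)) vs2 + vecMulVec y vs2) * Sm⁻¹ *
          (Uk * Us)ᴴ := by rw [hterm]
    _ = A * Us * Sm * Sm⁻¹ * (Uk * Us)ᴴ
          - vecMulVec (A *ᵥ (Ukᴴ *ᵥ x)) vs2 * Sm⁻¹ * (Uk * Us)ᴴ
          + vecMulVec y vs2 * Sm⁻¹ * (Uk * Us)ᴴ := by
        rw [add_mul, sub_mul, add_mul, sub_mul]
    _ = A * Ukᴴ + (vecMulVec y vs2 * Sm⁻¹ * (Uk * Us)ᴴ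
          - vecMulVec (A *ᵥ (Ukᴴ *ᵥ x)) vs2 * Sm⁻¹ * (Uk * Us)ᴴ) := by
        rw [hAU]; abel
    _ = Yk * Vk * Sgk⁻¹ * Ukᴴ +
        vecMulVec (y - (Yk * Vk * Sgk⁻¹ * Ukᴴ) *ᵥ x) vs2 * Sm⁻¹ * (Uk * Us)ᴴ := by
        rw [hAx, vecMulVec_sub', sub_mul, sub_mul, hA]
end

section
/- Let X ∈ ℝ^{n×m} and Γ ∈ ℝ^{l×m}, and let X = U Σ V* be an SVD with V ∈ ℂ^{m×m} unitary and Σ ∈ ℂ^{q_n×m}. Define R = [Σ; (V* Γ*)*] ∈ ℂ^{(q_n+l)×m}. If R = U_R Σ_R V_R* is an SVD with U_R partitioned as [U_{R1}; U_{R2}], where U_{R1} has q_n rows and U_{R2} has l rows (block rows matching those of R), then the stacked matrix X^c = [X; Γ] has SVD X^c = [U U_{R1}; U_{R2}] Σ_R (V V_R)*. -/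
open Matrix

/-- Incremental SVD for the data matrix augmented with exogenous input: if `X = U Sg Vᴴ`
is an SVD (`U` with orthonormal columns, `V` unitary), and
`R = [Sg; (Vᴴ Γᴴ)ᴴ] = U_R Sg_R V_Rᴴ` is an SVD with `U_R` partitioned into row blocks
`U_{R1}, U_{R2}`, then the stacked matrix `X^c = [X; Γ]` has SVD
`X^c = [U U_{R1}; U_{R2}] Sg_R (V V_R)ᴴ`. -/
theorem stmt11 (n l m qn p : ℕ)
    (X : Matrix (Fin n) (Fin m) ℂ) (Γ : Matrix (Fin l) (Fin m) ℂ)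
    (U : Matrix (Fin n) (Fin qn) ℂ) (Sg : Matrix (Fin qn) (Fin m) ℂ)
    (V : Matrix (Fin m) (Fin m) ℂ)
    (hU : Uᴴ * U = 1) (hV : Vᴴ * V = 1) (hV' : V * Vᴴ = 1)
    (hX : X = U * Sg * Vᴴ)
    (UR : Matrix (Fin qn ⊕ Fin l) (Fin p) ℂ) (SgR : Matrix (Fin p) (Fin m) ℂ)
    (VR : Matrix (Fin m) (Fin m) ℂ)
    (hUR : URᴴ * UR = 1) (hVR : VRᴴ * VR = 1) (hVR' : VR * VRᴴ = 1)
    (hR : Matrix.fromRows Sg ((Vᴴ * Γᴴ)ᴴ) = UR * SgR * VRᴴ) :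
    Matrix.fromRows X Γ
      = Matrix.fromRows (U * Matrix.of fun i j => UR (Sum.inl i) j)
          (Matrix.of fun i j => UR (Sum.inr i) j) * SgR * (V * VR)ᴴ ∧
    (Matrix.fromRows (U * Matrix.of fun i j => UR (Sum.inl i) j)
        (Matrix.of fun i j => UR (Sum.inr i) j))ᴴ *
      Matrix.fromRows (U * Matrix.of fun i j => UR (Sum.inl i) j)
        (Matrix.of fun i j => UR (Sum.inr i) j) = 1 ∧
    (V * VR)ᴴ * (V * VR) = 1 ∧ (V * VR) * (V * VR)ᴴ = 1 := by
  set UR1 : Matrix (Fin qn) (Fin p) ℂ := Matrix.of fun i j => UR (Sum.inl i) j with hUR1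
  set UR2 : Matrix (Fin l) (Fin p) ℂ := Matrix.of fun i j => UR (Sum.inr i) j with hUR2
  have hsplit : Matrix.fromRows UR1 UR2 = UR := by
    ext i j; cases i <;> rfl
  -- block equations from hR
  have hR' : Matrix.fromRows Sg ((Vᴴ * Γᴴ)ᴴ)
      = Matrix.fromRows (UR1 * SgR * VRᴴ) (UR2 * SgR * VRᴴ) := by
    rw [hR, ← hsplit, Matrix.fromRows_mul, Matrix.fromRows_mul]
  obtain ⟨h1, h2⟩ := (Matrix.fromRows_ext_iff _ _ _ _).mp hR'
  have hΓV : Γ * V = UR2 * SgR * VRᴴ := by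
    rw [← h2, Matrix.conjTranspose_mul, Matrix.conjTranspose_conjTranspose,
      Matrix.conjTranspose_conjTranspose]
  have hXeq : X = U * UR1 * SgR * (V * VR)ᴴ := by
    rw [hX, h1, Matrix.conjTranspose_mul]
    simp only [Matrix.mul_assoc]
  have hΓeq : Γ = UR2 * SgR * (V * VR)ᴴ := by
    have : Γ = UR2 * SgR * VRᴴ * Vᴴ := by
      rw [← hΓV, Matrix.mul_assoc, hV', Matrix.mul_one]
    rw [this, Matrix.conjTranspose_mul]
    simp only [Matrix.mul_assoc]
  refine ⟨?_, ?_, ?_, ?_⟩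
  · rw [Matrix.fromRows_mul, Matrix.fromRows_mul, ← hXeq, ← hΓeq]
  · rw [Matrix.conjTranspose_fromRows_eq_fromCols_conjTranspose,
      Matrix.fromCols_mul_fromRows, Matrix.conjTranspose_mul,
      Matrix.mul_assoc, ← Matrix.mul_assoc Uᴴ, hU, Matrix.one_mul]
    calc UR1ᴴ * UR1 + UR2ᴴ * UR2
        = (Matrix.fromRows UR1 UR2)ᴴ * Matrix.fromRows UR1 UR2 := by
          rw [Matrix.conjTranspose_fromRows_eq_fromCols_conjTranspose,
            Matrix.fromCols_mul_fromRows]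
      _ = 1 := by rw [hsplit, hUR]
  · rw [Matrix.conjTranspose_mul, Matrix.mul_assoc, ← Matrix.mul_assoc Vᴴ, hV,
      Matrix.one_mul, hVR]
  · rw [Matrix.conjTranspose_mul, Matrix.mul_assoc, ← Matrix.mul_assoc VR, hVR',
      Matrix.one_mul, hV']
end

section
/- Let χ_{k+1} ∈ ℂ^{n×w} be obtained from χ_k ∈ ℂ^{n×w} by deleting the first column and appending a new column x at the end. Suppose χ_k = U_χ Σ_χ V_χ* is an SVD with V_χ = [v₁; V₂] (v₁ the first row), Ś = Σ_χ − U_χ* χ_k e₁ e₁ᵀ V_χ has SVD U_ś Σ_ś V_ś*, and Ŝ = [Σ_ś, (U_χ U_ś)* x] has SVD U_ŝ Σ_ŝ [V_{ŝ1}; v_{ŝ2}]*. Then χ_{k+1} = (U_χ U_ś U_ŝ) Σ_ŝ [V₂ V_ś V_{ŝ1}; v_{ŝ2}]* and this is an SVD of χ_{k+1}. -/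
/-
Write `Ś = Σ − (Uᴴ χ e₁) v₁` for the deflated middle factor. Since `Uᴴ χ e₁ = Σ v₁ᴴ` and `v₁` is a
unit vector, `Ś v₁ᴴ = 0`, and injectivity of `U_ś Σ_ś` gives `v₁ V_ś = 0`. As `v₁` is orthogonal
to the remaining rows `V₂` of `V`, also `Ś V₂ᴴ = Σ V₂ᴴ`, so the window without its first column is
`U U_ś Σ_ś (V₂ V_ś)ᴴ`, and `(V₂ V_ś)ᴴ (V₂ V_ś) = V_śᴴ (1 − v₁ᴴ v₁) V_ś = 1`.
A nonzero `v₁` with `v₁ V_ś = 0` also rules out `q = w + 1`, so `q = n` and `U U_ś` is unitary.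
Appending `x` is then the incremental step
`[U U_ś Σ_ś (V₂ V_ś)ᴴ, x] = U U_ś [Σ_ś, (U U_ś)ᴴ x] diag(V₂ V_ś, 1)ᴴ`.
-/

open Matrix

namespace WindowedSVD

section Blocks

variable {n k w q : ℕ}

@[simp] lemma appendCol_last (M : Matrix (Fin n) (Fin k) ℂ) (x : Fin n → ℂ) (i : Fin n) :
    appendCol M x i (Fin.last k) = x i := by
  simp [appendCol]

@[simp] lemma appendCol_castSucc (M : Matrix (Fin n) (Fin k) ℂ) (x : Fin n → ℂ) (i : Fin n)
    (j : Fin k) : appendCol M x i j.castSucc = M i j := by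
  simp [appendCol]

@[simp] lemma appendRow_last (M : Matrix (Fin k) (Fin n) ℂ) (v : Fin n → ℂ) (j : Fin n) :
    appendRow M v (Fin.last k) j = v j := by
  simp [appendRow]

@[simp] lemma appendRow_castSucc (M : Matrix (Fin k) (Fin n) ℂ) (v : Fin n → ℂ) (i : Fin k)
    (j : Fin n) : appendRow M v i.castSucc j = M i j := by
  simp [appendRow]

/-- `diag(M, 1)`, with the `1` in the bottom-right corner. -/
def blockDiagOne (M : Matrix (Fin w) (Fin q) ℂ) : Matrix (Fin (w + 1)) (Fin (q + 1)) ℂ :=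
  appendCol (appendRow M 0) (Pi.single (Fin.last w) 1)

@[simp] lemma blockDiagOne_castSucc_castSucc (M : Matrix (Fin w) (Fin q) ℂ) (i : Fin w)
    (j : Fin q) : blockDiagOne M i.castSucc j.castSucc = M i j := by
  simp [blockDiagOne]

@[simp] lemma blockDiagOne_castSucc_last (M : Matrix (Fin w) (Fin q) ℂ) (i : Fin w) :
    blockDiagOne M i.castSucc (Fin.last q) = 0 := by
  simp [blockDiagOne, Fin.castSucc_ne_last]

@[simp] lemma blockDiagOne_last_castSucc (M : Matrix (Fin w) (Fin q) ℂ) (j : Fin q) :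
    blockDiagOne M (Fin.last w) j.castSucc = 0 := by
  simp [blockDiagOne]

@[simp] lemma blockDiagOne_last_last (M : Matrix (Fin w) (Fin q) ℂ) :
    blockDiagOne M (Fin.last w) (Fin.last q) = 1 := by
  simp [blockDiagOne]

lemma appendRow_mul_dropLastRow (M : Matrix (Fin w) (Fin q) ℂ)
    (P : Matrix (Fin (q + 1)) (Fin k) ℂ) :
    appendRow (M * dropLastRow P) (lastRow P) = blockDiagOne M * P := by
  ext i j
  induction i using Fin.lastCases <;>
    simp [mul_apply, Fin.sum_univ_castSucc, dropLastRow, lastRow]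

lemma appendCol_mul_conjTranspose_blockDiagOne (S : Matrix (Fin n) (Fin q) ℂ) (y : Fin n → ℂ)
    (M : Matrix (Fin w) (Fin q) ℂ) :
    appendCol S y * (blockDiagOne M)ᴴ = appendCol (S * Mᴴ) y := by
  ext i j
  induction j using Fin.lastCases <;>
    simp [mul_apply, Fin.sum_univ_castSucc, conjTranspose_apply]

lemma conjTranspose_blockDiagOne_mul_self {M : Matrix (Fin w) (Fin q) ℂ} (hM : Mᴴ * M = 1) :
    (blockDiagOne M)ᴴ * blockDiagOne M = 1 := by
  ext i j
  induction i using Fin.lastCases <;> induction j using Fin.lastCases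
  case cast.cast i j =>
    simpa [mul_apply, Fin.sum_univ_castSucc, one_apply] using congr_fun₂ hM i j
  all_goals simp [mul_apply, Fin.sum_univ_castSucc, one_apply, Fin.castSucc_ne_last,
    (Fin.castSucc_ne_last _).symm]

lemma mul_appendCol (A : Matrix (Fin n) (Fin k) ℂ) (B : Matrix (Fin k) (Fin q) ℂ)
    (y : Fin k → ℂ) : A * appendCol B y = appendCol (A * B) (A *ᵥ y) := by
  ext i j
  induction j using Fin.lastCases <;> simp [mul_apply, mulVec, dotProduct]

lemma dropFirstCol_mul_conjTranspose (A : Matrix (Fin n) (Fin k) ℂ)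
    (D : Matrix (Fin (w + 1)) (Fin k) ℂ) :
    dropFirstCol (A * Dᴴ) = A * (dropFirstRow D)ᴴ := by
  ext i j
  simp [dropFirstCol, dropFirstRow, mul_apply]

lemma conjTranspose_dropFirstRow_mul_self (D : Matrix (Fin (w + 1)) (Fin k) ℂ) :
    (dropFirstRow D)ᴴ * dropFirstRow D = Dᴴ * D - vecMulVec (star (D 0)) (D 0) := by
  ext i j
  simp [mul_apply, dropFirstRow, vecMulVec_apply, Fin.sum_univ_succ]

end Blocks

section LinearAlgebra

variable {l m r R : Type*} [CommRing R]

lemma mulVec_eq_zero_of_mul_mul_mulVec_eq_zero [Fintype l] [Fintype m] [Fintype r]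
    [DecidableEq r] {L : Matrix r l R} {A : Matrix l r R} {B : Matrix r r R} {C : Matrix r m R}
    {v : m → R} (hL : L * A = 1) (hB : IsUnit B) (h : (A * B * C) *ᵥ v = 0) : C *ᵥ v = 0 := by
  have hB' : B⁻¹ * B = 1 := nonsing_inv_mul B ((isUnit_iff_isUnit_det B).mp hB)
  calc C *ᵥ v = (B⁻¹ * (L * A) * B * C) *ᵥ v := by rw [hL, Matrix.mul_one, hB', Matrix.one_mul]
    _ = (B⁻¹ * L) *ᵥ ((A * B * C) *ᵥ v) := by simp only [mulVec_mulVec, Matrix.mul_assoc]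
    _ = 0 := by rw [h, mulVec_zero]

lemma eq_zero_of_vecMul_eq_zero [Fintype m] [DecidableEq m] {A B : Matrix m m R} {v : m → R}
    (hAB : A * B = 1) (hv : v ᵥ* A = 0) : v = 0 := by
  rw [← vecMul_one v, ← hAB, ← vecMul_vecMul, hv, zero_vecMul]

variable [StarRing R]

lemma conjTranspose_mul_self_mul_eq_one [Fintype l] [Fintype m] [DecidableEq m]
    [DecidableEq r] {A : Matrix l m R} {B : Matrix m r R}
    (hA : Aᴴ * A = 1) (hB : Bᴴ * B = 1) : (A * B)ᴴ * (A * B) = 1 := by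
  rw [conjTranspose_mul, Matrix.mul_assoc, ← Matrix.mul_assoc Aᴴ, hA, Matrix.one_mul, hB]

lemma row_ne_zero_of_mul_conjTranspose_eq_one [Fintype l] [DecidableEq m] [Nontrivial R]
    {V : Matrix m l R} (hV : V * Vᴴ = 1) (i : m) : V i ≠ 0 := by
  intro h
  simpa [mul_apply', h] using congr_fun₂ hV i i

end LinearAlgebra

section Decremental

variable {n w q : ℕ} {χk : Matrix (Fin n) (Fin (w + 1)) ℂ} {U : Matrix (Fin n) (Fin q) ℂ}
  {Sg : Matrix (Fin q) (Fin (w + 1)) ℂ} {V : Matrix (Fin (w + 1)) (Fin (w + 1)) ℂ}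
  {Uds Sgds : Matrix (Fin q) (Fin q) ℂ} {Vds : Matrix (Fin (w + 1)) (Fin q) ℂ}

lemma row_zero_vecMul_conjTranspose_dropFirstRow (hV' : V * Vᴴ = 1) :
    V 0 ᵥ* (dropFirstRow V)ᴴ = 0 := by
  ext j
  simpa [mul_apply, vecMul, dotProduct, dropFirstRow, one_apply, (Fin.succ_ne_zero j).symm]
    using congr_fun₂ hV' 0 j.succ

lemma deflation_eq_sub_vecMulVec (a : Fin n → ℂ) :
    Sg - Uᴴ * vecMulVec a (fun j : Fin (w + 1) => if j = 0 then (1 : ℂ) else 0) * V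
      = Sg - vecMulVec (Uᴴ *ᵥ a) (V 0) := by
  rw [mul_vecMulVec, vecMulVec_mul]
  congr 2
  ext j
  simp [vecMul, dotProduct]

lemma deflation_mul_conjTranspose_dropFirstRow (hV' : V * Vᴴ = 1) (a : Fin n → ℂ) :
    (Sg - Uᴴ * vecMulVec a (fun j : Fin (w + 1) => if j = 0 then (1 : ℂ) else 0) * V)
      * (dropFirstRow V)ᴴ = Sg * (dropFirstRow V)ᴴ := by
  rw [deflation_eq_sub_vecMulVec, Matrix.sub_mul, vecMulVec_mul,
    row_zero_vecMul_conjTranspose_dropFirstRow hV', sub_eq_self]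
  ext
  simp [vecMulVec_apply]

lemma deflation_mulVec_star_row_zero (hU : Uᴴ * U = 1) (hV' : V * Vᴴ = 1)
    (hχ : χk = U * Sg * Vᴴ) :
    (Sg - Uᴴ * vecMulVec (fun i => χk i 0)
        (fun j : Fin (w + 1) => if j = 0 then (1 : ℂ) else 0) * V) *ᵥ star (V 0) = 0 := by
  have hUχ : Uᴴ * χk = Sg * Vᴴ := by
    rw [hχ, ← Matrix.mul_assoc, ← Matrix.mul_assoc, hU, Matrix.one_mul]
  have hcol : Uᴴ *ᵥ (fun i => χk i 0) = Sg *ᵥ star (V 0) := by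
    ext i
    simpa [mul_apply, mulVec, dotProduct] using congr_fun₂ hUχ i 0
  have hnorm : V 0 ⬝ᵥ star (V 0) = 1 := by
    have h := congr_fun₂ hV' 0 0
    rwa [mul_apply', one_apply_eq] at h
  rw [deflation_eq_sub_vecMulVec, sub_mulVec, vecMulVec_mulVec, hnorm, hcol]
  simp

lemma dropFirstCol_eq_decremental (hV' : V * Vᴴ = 1) (hχ : χk = U * Sg * Vᴴ)
    (hSd : Sg - Uᴴ * vecMulVec (fun i => χk i 0)
        (fun j : Fin (w + 1) => if j = 0 then (1 : ℂ) else 0) * V = Uds * Sgds * Vdsᴴ) :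
    dropFirstCol χk = U * Uds * Sgds * (dropFirstRow V * Vds)ᴴ := by
  calc dropFirstCol χk = U * (Sg * (dropFirstRow V)ᴴ) := by
        rw [hχ, dropFirstCol_mul_conjTranspose, Matrix.mul_assoc]
    _ = U * (Uds * Sgds * Vdsᴴ * (dropFirstRow V)ᴴ) := by
        rw [← hSd, deflation_mul_conjTranspose_dropFirstRow hV']
    _ = U * Uds * Sgds * (dropFirstRow V * Vds)ᴴ := by
        simp only [conjTranspose_mul, Matrix.mul_assoc]

/-- `v₁ V_ś = 0`: the deflated matrix `Ś = U_ś Σ_ś V_śᴴ` annihilates `v₁ᴴ`, and `U_ś Σ_ś` is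
injective. -/
lemma row_zero_vecMul_eq_zero (hU : Uᴴ * U = 1) (hV' : V * Vᴴ = 1) (hχ : χk = U * Sg * Vᴴ)
    (hUds : Udsᴴ * Uds = 1) (hSgds : IsUnit Sgds)
    (hSd : Sg - Uᴴ * vecMulVec (fun i => χk i 0)
        (fun j : Fin (w + 1) => if j = 0 then (1 : ℂ) else 0) * V = Uds * Sgds * Vdsᴴ) :
    V 0 ᵥ* Vds = 0 := by
  have h : Vdsᴴ *ᵥ star (V 0) = 0 :=
    mulVec_eq_zero_of_mul_mul_mulVec_eq_zero hUds hSgds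
      (hSd ▸ deflation_mulVec_star_row_zero hU hV' hχ)
  rwa [← star_vecMul, star_eq_zero] at h

end Decremental

lemma conjTranspose_mul_self_dropFirstRow_mul {w k q : ℕ} {V : Matrix (Fin (w + 1)) (Fin k) ℂ}
    {Vds : Matrix (Fin k) (Fin q) ℂ} (hV : Vᴴ * V = 1) (hVds : Vdsᴴ * Vds = 1)
    (hv : V 0 ᵥ* Vds = 0) :
    (dropFirstRow V * Vds)ᴴ * (dropFirstRow V * Vds) = 1 := by
  calc (dropFirstRow V * Vds)ᴴ * (dropFirstRow V * Vds)
      = Vdsᴴ * ((dropFirstRow V)ᴴ * dropFirstRow V) * Vds := by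
        simp only [conjTranspose_mul, Matrix.mul_assoc]
    _ = 1 := by
        rw [conjTranspose_dropFirstRow_mul_self, Matrix.mul_sub, Matrix.sub_mul, hV,
          Matrix.mul_one, hVds, mul_vecMulVec, vecMulVec_mul, ← star_vecMul, hv]
        simp

lemma appendCol_eq_of_incremental {n q k w r s : ℕ} {W : Matrix (Fin n) (Fin q) ℂ}
    (hW : W * Wᴴ = 1) {S : Matrix (Fin q) (Fin k) ℂ} {M : Matrix (Fin w) (Fin k) ℂ}
    {x : Fin n → ℂ} {Uh : Matrix (Fin q) (Fin r) ℂ} {Sh : Matrix (Fin r) (Fin s) ℂ}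
    {Vh : Matrix (Fin (k + 1)) (Fin s) ℂ} (h : appendCol S (Wᴴ *ᵥ x) = Uh * Sh * Vhᴴ) :
    appendCol (W * S * Mᴴ) x = W * Uh * Sh * (blockDiagOne M * Vh)ᴴ := by
  calc appendCol (W * S * Mᴴ) x = W * appendCol (S * Mᴴ) (Wᴴ *ᵥ x) := by
        rw [mul_appendCol, mulVec_mulVec, hW, one_mulVec, Matrix.mul_assoc]
    _ = W * (appendCol S (Wᴴ *ᵥ x) * (blockDiagOne M)ᴴ) := by
        rw [appendCol_mul_conjTranspose_blockDiagOne]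
    _ = W * Uh * Sh * (blockDiagOne M * Vh)ᴴ := by
        rw [h, conjTranspose_mul]
        simp only [Matrix.mul_assoc]

end WindowedSVD

open WindowedSVD in
theorem stmt17_general (n w q : ℕ) (hq : q = min n (w + 1))
    (χk : Matrix (Fin n) (Fin (w + 1)) ℂ) (x : Fin n → ℂ)
    (U : Matrix (Fin n) (Fin q) ℂ) (Sg : Matrix (Fin q) (Fin (w + 1)) ℂ)
    (V : Matrix (Fin (w + 1)) (Fin (w + 1)) ℂ)
    (hU : Uᴴ * U = 1) (hV : Vᴴ * V = 1) (hV' : V * Vᴴ = 1)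
    (hχ : χk = U * Sg * Vᴴ)
    (Uds Sgds : Matrix (Fin q) (Fin q) ℂ) (Vds : Matrix (Fin (w + 1)) (Fin q) ℂ)
    (hUds : Udsᴴ * Uds = 1) (hVds : Vdsᴴ * Vds = 1) (hSgdsInv : IsUnit Sgds)
    (hSd : Sg - Uᴴ * vecMulVec (fun i => χk i 0)
        (fun j : Fin (w + 1) => if j = 0 then (1 : ℂ) else 0) * V = Uds * Sgds * Vdsᴴ)
    (Uhs Sghs : Matrix (Fin q) (Fin q) ℂ) (Vhs : Matrix (Fin (q + 1)) (Fin q) ℂ)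
    (hUhs : Uhsᴴ * Uhs = 1) (hVhs : Vhsᴴ * Vhs = 1)
    (hSh : appendCol Sgds ((U * Uds)ᴴ *ᵥ x) = Uhs * Sghs * Vhsᴴ) :
    appendCol (dropFirstCol χk) x
      = (U * Uds * Uhs) * Sghs *
        (appendRow (dropFirstRow V * Vds * dropLastRow Vhs) (lastRow Vhs))ᴴ ∧
    (U * Uds * Uhs)ᴴ * (U * Uds * Uhs) = 1 ∧
    (appendRow (dropFirstRow V * Vds * dropLastRow Vhs) (lastRow Vhs))ᴴ *
      appendRow (dropFirstRow V * Vds * dropLastRow Vhs) (lastRow Vhs) = 1 := by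
  have hv₁ : V 0 ᵥ* Vds = 0 := row_zero_vecMul_eq_zero hU hV' hχ hUds hSgdsInv hSd
  -- a square `Vds` would be unitary, and then `hv₁` would kill the unit row `V 0`
  obtain rfl : q = n := by
    by_contra hqn
    obtain rfl : q = w + 1 := by omega
    exact row_ne_zero_of_mul_conjTranspose_eq_one hV' 0
      (eq_zero_of_vecMul_eq_zero (mul_eq_one_comm.mp hVds) hv₁)
  have hUUds : (U * Uds)ᴴ * (U * Uds) = 1 := conjTranspose_mul_self_mul_eq_one hU hUds
  rw [appendRow_mul_dropLastRow]
  refine ⟨?_, conjTranspose_mul_self_mul_eq_one hUUds hUhs, ?_⟩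
  · rw [dropFirstCol_eq_decremental hV' hχ hSd]
    exact appendCol_eq_of_incremental (mul_eq_one_comm.mp hUUds) hSh
  · exact conjTranspose_mul_self_mul_eq_one
      (conjTranspose_blockDiagOne_mul_self (conjTranspose_mul_self_dropFirstRow_mul hV hVds hv₁))
      hVhs

/-- Windowed incremental SVD: sliding the window (deleting the first column of `χ_k` and
appending `x`) and combining the decremental SVD step (via `Ś = Sg − Uᴴ x₁ z₁ᵀ V` with SVD
`U_ś Sg_ś V_śᴴ`, `Sg_ś` invertible) with the incremental append step (via
`Ŝ = [Sg_ś, (U U_ś)ᴴ x]` with SVD `U_ŝ Sg_ŝ [V_{ŝ1}; v_{ŝ2}]ᴴ`) yields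
`χ_{k+1} = (U U_ś U_ŝ) Sg_ŝ [V₂ V_ś V_{ŝ1}; v_{ŝ2}]ᴴ`, and this is an SVD of `χ_{k+1}`. -/
theorem stmt17 (n w q : ℕ) (hq : q = min n (w + 1))
    (χk : Matrix (Fin n) (Fin (w + 1)) ℂ) (x : Fin n → ℂ)
    (U : Matrix (Fin n) (Fin q) ℂ) (Sg : Matrix (Fin q) (Fin (w + 1)) ℂ)
    (V : Matrix (Fin (w + 1)) (Fin (w + 1)) ℂ)
    (hU : Uᴴ * U = 1) (hV : Vᴴ * V = 1) (hV' : V * Vᴴ = 1)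
    (hχ : χk = U * Sg * Vᴴ)
    (Uds Sgds : Matrix (Fin q) (Fin q) ℂ) (Vds : Matrix (Fin (w + 1)) (Fin q) ℂ)
    (hUds : Udsᴴ * Uds = 1) (hVds : Vdsᴴ * Vds = 1) (hSgdsInv : IsUnit Sgds)
    (hSd : Sg - Uᴴ * vecMulVec (fun i => χk i 0)
        (fun j : Fin (w + 1) => if j = 0 then (1 : ℂ) else 0) * V = Uds * Sgds * Vdsᴴ)
    (Uhs Sghs : Matrix (Fin q) (Fin q) ℂ) (Vhs : Matrix (Fin (q + 1)) (Fin q) ℂ)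
    (hUhs : Uhsᴴ * Uhs = 1) (hUhs' : Uhs * Uhsᴴ = 1) (hVhs : Vhsᴴ * Vhs = 1)
    (hSghsDiag : Sghs.IsDiag)
    (hSghsPos : ∀ i, 0 ≤ (Sghs i i).re ∧ (Sghs i i).im = 0)
    (hSh : appendCol Sgds ((U * Uds)ᴴ *ᵥ x) = Uhs * Sghs * Vhsᴴ) :
    appendCol (dropFirstCol χk) x
      = (U * Uds * Uhs) * Sghs *
        (appendRow (dropFirstRow V * Vds * dropLastRow Vhs) (lastRow Vhs))ᴴ ∧
    (U * Uds * Uhs)ᴴ * (U * Uds * Uhs) = 1 ∧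
    (appendRow (dropFirstRow V * Vds * dropLastRow Vhs) (lastRow Vhs))ᴴ *
      appendRow (dropFirstRow V * Vds * dropLastRow Vhs) (lastRow Vhs) = 1 :=
  stmt17_general n w q hq χk x U Sg V hU hV hV' hχ Uds Sgds Vds hUds hVds hSgdsInv hSd Uhs Sghs Vhs
    hUhs hVhs hSh
end
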